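/- arXiv:2505.19438 — 2 statements merged into one kernel-verified Lean document; each statement's English description precedes it below -/
import Mathlib

section
/- Define φ(z) = min(1, e^z)/(1 + e^z). Let m ≥ 0 and let z₁, z₂ be real numbers with |z₁| ≥ m and |z₂| ≥ m. Then |φ(z₁) − φ(z₂)| ≤ (1/(e^{m/2} + e^{-m/2})²)·|z₁ − z₂|. -/
/-! `φ(z) = σ(-|z|)` for the logistic function `σ`, whose derivative is
`σ(x)(1 - σ(x)) = 1 / (e^{x/2} + e^{-x/2})² = 1 / (4 cosh² (x/2))`. Since `cosh` grows with `|x|`,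
`σ` is Lipschitz on `(-∞, -m]` with the constant of the statement, and `z ↦ -|z|` maps
`{|z| ≥ m}` into `(-∞, -m]` without increasing distances. -/

open Real

namespace Real

lemma min_one_exp_div_one_add_exp (z : ℝ) :
    min 1 (exp z) / (1 + exp z) = sigmoid (-|z|) := by
  rcases le_total z 0 with hz | hz
  · rw [abs_of_nonpos hz, neg_neg, min_eq_right (exp_le_one_iff.mpr hz), sigmoid_def, exp_neg]
    field_simp
    ring
  · rw [abs_of_nonneg hz, min_eq_left (one_le_exp hz), sigmoid_def, neg_neg, one_div]

lemma sigmoid_mul_one_sub_sigmoid (x : ℝ) :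
    sigmoid x * (1 - sigmoid x) = 1 / (exp (x / 2) + exp (-x / 2)) ^ 2 := by
  have hx : exp x = exp (x / 2) ^ 2 := by rw [← exp_nat_mul]; ring_nf
  rw [← sigmoid_neg, sigmoid_def, sigmoid_def, neg_neg, exp_neg, neg_div, exp_neg, hx]
  field_simp
  ring

lemma exp_add_exp_neg_le_of_abs_le {x y : ℝ} (h : |x| ≤ |y|) :
    exp x + exp (-x) ≤ exp y + exp (-y) := by
  have hcosh := cosh_le_cosh.mpr h
  rw [cosh_eq, cosh_eq] at hcosh
  linarith

lemma sigmoid_mul_one_sub_sigmoid_le {m x : ℝ} (h : |m| ≤ |x|) :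
    sigmoid x * (1 - sigmoid x) ≤ 1 / (exp (m / 2) + exp (-m / 2)) ^ 2 := by
  rw [sigmoid_mul_one_sub_sigmoid, neg_div, neg_div]
  have hle : exp (m / 2) + exp (-(m / 2)) ≤ exp (x / 2) + exp (-(x / 2)) :=
    exp_add_exp_neg_le_of_abs_le (by rw [abs_div, abs_div, abs_two]; linarith)
  exact one_div_le_one_div_of_le (by positivity) (pow_le_pow_left₀ (by positivity) hle 2)

lemma abs_sigmoid_sub_sigmoid_le {m a b : ℝ} (hm : 0 ≤ m) (ha : a ≤ -m) (hb : b ≤ -m) :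
    |sigmoid a - sigmoid b| ≤ 1 / (exp (m / 2) + exp (-m / 2)) ^ 2 * |a - b| := by
  refine (convex_Iic (-m)).norm_image_sub_le_of_norm_hasDerivWithin_le
    (fun x _ => (hasDerivAt_sigmoid x).hasDerivWithinAt) (fun x hx => ?_) hb ha
  have hmx : |m| ≤ |x| := by
    rw [abs_of_nonneg hm]
    exact le_abs.mpr (Or.inr (le_neg_of_le_neg hx))
  rw [norm_eq_abs, abs_of_nonneg (mul_nonneg (sigmoid_nonneg x) (sub_nonneg.mpr (sigmoid_le_one x)))]
  exact sigmoid_mul_one_sub_sigmoid_le hmx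

end Real

/-- With `φ(z) = min(1, e^z)/(1 + e^z)`, `m ≥ 0`, and reals
`z₁, z₂` with `|z₁| ≥ m` and `|z₂| ≥ m`, one has
`|φ(z₁) − φ(z₂)| ≤ (1/(e^{m/2} + e^{-m/2})²)·|z₁ − z₂|`. -/
theorem stmt12 (m : ℝ) (hm : 0 ≤ m) (z₁ z₂ : ℝ)
    (h₁ : m ≤ |z₁|) (h₂ : m ≤ |z₂|) :
    |min 1 (Real.exp z₁) / (1 + Real.exp z₁)
      - min 1 (Real.exp z₂) / (1 + Real.exp z₂)|
      ≤ 1 / (Real.exp (m / 2) + Real.exp (-m / 2)) ^ 2 * |z₁ - z₂| := by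
  rw [min_one_exp_div_one_add_exp, min_one_exp_div_one_add_exp]
  calc _ ≤ 1 / (exp (m / 2) + exp (-m / 2)) ^ 2 * |(-|z₁|) - (-|z₂|)| :=
        abs_sigmoid_sub_sigmoid_le hm (neg_le_neg h₁) (neg_le_neg h₂)
    _ ≤ 1 / (exp (m / 2) + exp (-m / 2)) ^ 2 * |z₁ - z₂| := by
        rw [neg_sub_neg, abs_sub_comm z₁]
        exact mul_le_mul_of_nonneg_left (abs_abs_sub_abs_le_abs_sub z₂ z₁) (by positivity)
end

section
/- Let β ≥ 0, W an N×N real matrix, h ∈ ℝ, and suppose 2β·sup_i Σ_{k≠i}|W_{ik}| ≤ |h|. Fix i ≠ j and x ∈ {-1,1}^N. Let p(x) = e^{a(x)}/(e^{a(x)} + e^{-a(x)}) with a(x) = −(β/2)Σ_{k≠i}W_{ik}x_k + h (the conditional probability that spin i equals +1 given the others under ν_{β,h}). Then for configurations x, x̂ that agree off site j, |p(x) − p(x̂)| ≤ 2β|W_{ij}|/(e^{3|h|/4} + e^{-3|h|/4}). -/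
/-!
The conditional probability is `σ(2a)` for the logistic sigmoid `σ`, whose derivative
`σ(1 - σ) = σ(y)σ(-y)` is at most `σ(-|y|)`. The field condition keeps `2a` within `|h|/2` of
`2h`, a convex region where `|y| ≥ 3|h|/2`, so the mean value theorem gives
`|p(x) - p(x')| ≤ σ(-3|h|/2) · 2|a(x) - a(x')|`. Flipping spin `j` moves the local field by at
most `β|W_ij|`, and `σ(-2c) = e^{-c}/(e^c + e^{-c}) ≤ 1/(e^c + e^{-c})`.
-/

open Finset

lemma abs_le_abs_add_of_mem_closedBall {a r y : ℝ} (hy : y ∈ Metric.closedBall a r) :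
    |a| ≤ |y| + r := by
  rw [Metric.mem_closedBall, Real.dist_eq] at hy
  linarith [abs_sub_abs_le_abs_sub a y, abs_sub_comm a y]

namespace Real

lemma exp_div_exp_add_exp_neg (z : ℝ) : exp z / (exp z + exp (-z)) = sigmoid (2 * z) := by
  rw [sigmoid_def, show -(2 * z) = -z + -z by ring, exp_add]
  have : exp z * exp (-z) = 1 := by rw [← exp_add, add_neg_cancel, exp_zero]
  field_simp
  linear_combination exp (-z) * this

lemma sigmoid_mul_one_sub_sigmoid_le_s17 (x : ℝ) : sigmoid x * (1 - sigmoid x) ≤ sigmoid (-|x|) := by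
  rw [← sigmoid_neg]
  rcases abs_choice x with hx | hx <;> rw [hx]
  · exact mul_le_of_le_one_left (sigmoid_nonneg _) (sigmoid_le_one x)
  · rw [neg_neg]
    exact mul_le_of_le_one_right (sigmoid_nonneg _) (sigmoid_le_one _)

lemma abs_sigmoid_sub_le {S : Set ℝ} {c s t : ℝ} (hS : Convex ℝ S) (hc : ∀ x ∈ S, c ≤ |x|)
    (hs : s ∈ S) (ht : t ∈ S) : |sigmoid s - sigmoid t| ≤ sigmoid (-c) * |s - t| := by
  refine hS.norm_image_sub_le_of_norm_deriv_le (fun x _ => differentiableAt_sigmoid) ?_ ht hs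
  intro x hx
  rw [deriv_sigmoid, norm_of_nonneg (mul_nonneg (sigmoid_nonneg x) (sub_nonneg.2 (sigmoid_le_one x)))]
  exact (sigmoid_mul_one_sub_sigmoid_le_s17 x).trans (sigmoid_le (neg_le_neg (hc x hx)))

end Real

section LocalField

variable {ι : Type*} [Fintype ι] [DecidableEq ι]

noncomputable def localField (β : ℝ) (W : ι → ι → ℝ) (h : ℝ) (i : ι) (z : ι → ℝ) : ℝ :=
  -(β / 2) * ∑ k ∈ univ.erase i, W i k * z k + h

variable {β h : ℝ} {W : ι → ι → ℝ} {i : ι}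

lemma abs_localField_sub_le (hβ : 0 ≤ β) {z : ι → ℝ} (hz : ∀ k, |z k| ≤ 1) :
    |localField β W h i z - h| ≤ β / 2 * ∑ k ∈ univ.erase i, |W i k| := by
  have hsum : |∑ k ∈ univ.erase i, W i k * z k| ≤ ∑ k ∈ univ.erase i, |W i k| :=
    (abs_sum_le_sum_abs _ _).trans <| sum_le_sum fun k _ => by
      rw [abs_mul]; exact mul_le_of_le_one_right (abs_nonneg _) (hz k)
  rw [localField, add_sub_cancel_right, abs_mul, abs_neg, abs_of_nonneg (by positivity)]
  exact mul_le_mul_of_nonneg_left hsum (by positivity)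

lemma two_mul_localField_mem_closedBall (hβ : 0 ≤ β)
    (hfield : 2 * β * ∑ k ∈ univ.erase i, |W i k| ≤ |h|) {z : ι → ℝ} (hz : ∀ k, |z k| ≤ 1) :
    2 * localField β W h i z ∈ Metric.closedBall (2 * h) (|h| / 2) := by
  rw [Metric.mem_closedBall, Real.dist_eq, ← mul_sub, abs_mul, abs_two]
  linarith [abs_localField_sub_le (W := W) (h := h) (i := i) hβ hz]

lemma localField_sub_localField {j : ι} (hji : j ≠ i) {x x' : ι → ℝ}
    (hoff : ∀ k, k ≠ j → x k = x' k) :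
    localField β W h i x - localField β W h i x' = -(β / 2) * (W i j * (x j - x' j)) := by
  have hsum : ∑ k ∈ univ.erase i, W i k * x k - ∑ k ∈ univ.erase i, W i k * x' k
      = W i j * (x j - x' j) := by
    rw [← sum_sub_distrib, sum_eq_single_of_mem j (mem_erase.2 ⟨hji, mem_univ j⟩)]
    · ring
    · intro k _ hk
      rw [hoff k hk, sub_self]
  rw [localField, localField, ← hsum]
  ring

lemma abs_localField_sub_localField_le (hβ : 0 ≤ β) {j : ι} (hji : j ≠ i) {x x' : ι → ℝ}
    (hoff : ∀ k, k ≠ j → x k = x' k) (hxj : |x j| ≤ 1) (hx'j : |x' j| ≤ 1) :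
    |localField β W h i x - localField β W h i x'| ≤ β * |W i j| := by
  have hdiff : |x j - x' j| ≤ 2 := (abs_sub _ _).trans (by linarith)
  rw [localField_sub_localField hji hoff, abs_mul, abs_mul, abs_neg,
    abs_of_nonneg (by positivity : 0 ≤ β / 2)]
  have := mul_le_mul_of_nonneg_left hdiff (by positivity : 0 ≤ β / 2 * |W i j|)
  linarith

end LocalField

/-- Let `β ≥ 0`, `W` an `N×N` real matrix, `h ∈ ℝ` with
`2β·sup_i Σ_{k≠i}|W_{ik}| ≤ |h|`. Fix `i ≠ j` and let
`p(x) = e^{a(x)}/(e^{a(x)} + e^{-a(x)})` with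
`a(x) = −(β/2)Σ_{k≠i}W_{ik}x_k + h` (the conditional probability that spin `i`
is `+1` under `ν_{β,h}`). Then for configurations `x, x' ∈ {-1,1}^N` agreeing
off site `j`, `|p(x) − p(x')| ≤ 2β|W_{ij}|/(e^{3|h|/4} + e^{-3|h|/4})`. -/
theorem stmt17 (N : ℕ) (β : ℝ) (hβ : 0 ≤ β) (W : Fin N → Fin N → ℝ) (h : ℝ)
    (hfield : ∀ i : Fin N, 2 * β * ∑ k ∈ univ.erase i, |W i k| ≤ |h|)
    (i j : Fin N) (hij : i ≠ j)
    (x x' : Fin N → ℝ)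
    (hx : ∀ k, x k = 1 ∨ x k = -1) (hx' : ∀ k, x' k = 1 ∨ x' k = -1)
    (hoff : ∀ k, k ≠ j → x k = x' k) :
    |(fun z : Fin N → ℝ =>
        Real.exp (-(β / 2) * ∑ k ∈ univ.erase i, W i k * z k + h) /
          (Real.exp (-(β / 2) * ∑ k ∈ univ.erase i, W i k * z k + h) +
            Real.exp (-(-(β / 2) * ∑ k ∈ univ.erase i, W i k * z k + h)))) x
      - (fun z : Fin N → ℝ =>
        Real.exp (-(β / 2) * ∑ k ∈ univ.erase i, W i k * z k + h) /
          (Real.exp (-(β / 2) * ∑ k ∈ univ.erase i, W i k * z k + h) +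
            Real.exp (-(-(β / 2) * ∑ k ∈ univ.erase i, W i k * z k + h)))) x'|
      ≤ 2 * β * |W i j| / (Real.exp (3 * |h| / 4) + Real.exp (-(3 * |h|) / 4)) := by
  set a := localField β W h i
  set c := 3 * |h| / 4 with hc_def
  have hspin : ∀ z : Fin N → ℝ, (∀ k, z k = 1 ∨ z k = -1) → ∀ k, |z k| ≤ 1 :=
    fun z hz k => by rcases hz k with hk | hk <;> simp [hk]
  have hfar : ∀ y ∈ Metric.closedBall (2 * h) (|h| / 2), 2 * c ≤ |y| := by
    intro y hy
    have := abs_le_abs_add_of_mem_closedBall hy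
    rw [abs_mul, abs_two] at this
    linarith
  have hc : 0 ≤ c := by positivity
  calc _ = |Real.sigmoid (2 * a x) - Real.sigmoid (2 * a x')| := by
        simp only [Real.exp_div_exp_add_exp_neg]; rfl
    _ ≤ Real.sigmoid (-(2 * c)) * |2 * a x - 2 * a x'| :=
        Real.abs_sigmoid_sub_le (convex_closedBall _ _) hfar
          (two_mul_localField_mem_closedBall hβ (hfield i) (hspin x hx))
          (two_mul_localField_mem_closedBall hβ (hfield i) (hspin x' hx'))
    _ = Real.exp (-c) / (Real.exp c + Real.exp (-c)) * (2 * |a x - a x'|) := by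
        rw [← mul_neg, ← Real.exp_div_exp_add_exp_neg, neg_neg, ← mul_sub, abs_mul, abs_two]
        ring_nf
    _ ≤ 1 / (Real.exp c + Real.exp (-c)) * (2 * (β * |W i j|)) := by
        gcongr
        · exact Real.exp_le_one_iff.2 (by linarith)
        · exact abs_localField_sub_localField_le hβ hij.symm hoff (hspin x hx j) (hspin x' hx' j)
    _ = _ := by rw [neg_div]; ring
end
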